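/- arXiv:1612.08907 — 2 statements merged into one kernel-verified Lean document; each statement's English description precedes it below -/
import Mathlib

section
/- Let J be the 4×4 block matrix [[0, -I₂], [I₂, 0]]. For the Hurwitz matrix Γ one has Γ(e^{θJ} ξ) = Γ(ξ) e^{θJ} for all θ ∈ ℝ and ξ ∈ ℝ⁴. -/
open Matrix

/-- The 3×4 Hurwitz matrix of the KS transformation. -/
def hurwitz (ξ : Fin 4 → ℝ) : Matrix (Fin 3) (Fin 4) ℝ :=
  !![ξ 0, -ξ 1, -ξ 2, ξ 3;
     ξ 1,  ξ 0, -ξ 3, -ξ 2;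
     ξ 2,  ξ 3,  ξ 0,  ξ 1]

/-- The 4×4 matrix `J = [[0, -I₂], [I₂, 0]]`. -/
def Jmat : Matrix (Fin 4) (Fin 4) ℝ :=
  !![0, 0, -1,  0;
     0, 0,  0, -1;
     1, 0,  0,  0;
     0, 1,  0,  0]

/-!
Since `J * J = -1`, the algebra map `ℂ → Mat₄(ℝ)` sending `i` to `J` carries `exp (θ i)` to
`exp (θ J)`, so `exp (θ J) = cos θ • 1 + sin θ • J`. As `Γ` is linear and `Γ (J ξ) = Γ ξ * J`, both
sides of the identity are the same combination of `Γ ξ` and `Γ ξ * J`.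
-/

theorem NormedSpace.exp_real_smul_of_mul_self_eq_neg_one {A : Type*} [NormedRing A]
    [NormedAlgebra ℝ A] {x : A} (hx : x * x = -1) (θ : ℝ) :
    NormedSpace.exp (θ • x) = Real.cos θ • 1 + Real.sin θ • x := by
  let φ : ℂ →ₐ[ℝ] A := Complex.liftAux x hx
  have hφ : Continuous φ := φ.toLinearMap.continuous_of_finiteDimensional
  calc NormedSpace.exp (θ • x) = φ (Complex.exp (θ * Complex.I)) := by
        rw [Complex.exp_eq_exp_ℂ, NormedSpace.map_exp_of_mem_ball (𝕂 := ℝ) φ hφ]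
        · simp [φ, Complex.liftAux_apply]
        · simp [NormedSpace.expSeries_radius_eq_top]
    _ = Real.cos θ • 1 + Real.sin θ • x := by
        simp [φ, Complex.liftAux_apply, Algebra.algebraMap_eq_smul_one,
          Complex.exp_ofReal_mul_I_re, Complex.exp_ofReal_mul_I_im]

theorem Jmat_mul_self : Jmat * Jmat = -1 := by
  ext i j
  fin_cases i <;> fin_cases j <;> simp [Jmat, Matrix.mul_apply, Fin.sum_univ_four]

-- `exp` depends only on the topology; a norm is chosen just to apply the normed-algebra lemma.
theorem exp_smul_Jmat (θ : ℝ) :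
    NormedSpace.exp (θ • Jmat) = Real.cos θ • 1 + Real.sin θ • Jmat :=
  letI := Matrix.linftyOpNormedRing (n := Fin 4) (α := ℝ)
  letI := Matrix.linftyOpNormedAlgebra (R := ℝ) (n := Fin 4) (α := ℝ)
  NormedSpace.exp_real_smul_of_mul_self_eq_neg_one Jmat_mul_self θ

theorem hurwitz_add (ξ η : Fin 4 → ℝ) : hurwitz (ξ + η) = hurwitz ξ + hurwitz η := by
  ext i j
  fin_cases i <;> fin_cases j <;> simp [hurwitz] <;> ring

theorem hurwitz_smul (c : ℝ) (ξ : Fin 4 → ℝ) : hurwitz (c • ξ) = c • hurwitz ξ := by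
  ext i j
  fin_cases i <;> fin_cases j <;> simp [hurwitz]

theorem hurwitz_Jmat_mulVec (ξ : Fin 4 → ℝ) : hurwitz (Jmat *ᵥ ξ) = hurwitz ξ * Jmat := by
  ext i j
  fin_cases i <;> fin_cases j <;>
    simp [hurwitz, Jmat, Matrix.mulVec, Matrix.mul_apply, Fin.sum_univ_four, dotProduct]

/-- Equivariance of the Hurwitz matrix: `Γ(e^{θJ} ξ) = Γ(ξ) e^{θJ}`. -/
theorem hurwitz_equivariant (θ : ℝ) (ξ : Fin 4 → ℝ) :
    hurwitz ((NormedSpace.exp (θ • Jmat)).mulVec ξ) =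
      hurwitz ξ * NormedSpace.exp (θ • Jmat) := by
  rw [exp_smul_Jmat, add_mulVec, smul_mulVec, smul_mulVec, one_mulVec, hurwitz_add,
    hurwitz_smul, hurwitz_smul, hurwitz_Jmat_mulVec, Matrix.mul_add, Matrix.mul_smul,
    Matrix.mul_smul, Matrix.mul_one]
end

section
/- Lyapunov–Schmidt norm estimate: Let E = E₁ × E₂ be Banach spaces, G = (G₁, G₂) : Z → E a C¹ map on an open set Z = Z₁ × Z₂ with ‖DG(q,x)‖ ≤ C and ‖(D_x G₂(q,x))⁻¹‖ ≤ C on Z. Suppose x = x(q) is a C¹ solution of G₂(q, x(q)) = 0 on Z₁, and set Γ(q) = G₁(q, x(q)). Then for each q, the derivative DΓ(q) is invertible if and only if DG(q, x(q)) is invertible, and there is a constant c depending only on C such that ‖(DΓ(q))⁻¹‖ ≤ ‖(DG(q,x(q)))⁻¹‖ ≤ c(1 + ‖(DΓ(q))⁻¹‖). -/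
/-! Let `M = DG(q, x q)` and `D = Dx(q)`. Differentiating `G₂(q, x(q)) = 0` shows that `M` maps
the graph of `D` into `E₁ × 0`, acting there as `Γ' = DΓ(q)`, while on `0 × E₂` it acts as `(B, T)`
with `T = D_x G₂` invertible. Hence `M (u, v) = (Γ' u + B (v - D u), T (v - D u))`: after the shear
`(u, v) ↦ (u, v - D u)` the operator `M` is block triangular and `Γ'` is the Schur complement of
`T`. This gives the explicit inverse `M⁻¹ (u, v) = (w, D w + T⁻¹ v)` with `w = Γ'⁻¹ (u - B T⁻¹ v)`,
whose first component at `(u, 0)` is `Γ'⁻¹ u`, and the bounds `‖B‖ ≤ ‖M‖ ≤ C` and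
`‖D‖ ≤ ‖T⁻¹‖ ‖M‖ ≤ C²` turn it into the estimate. -/

open ContinuousLinearMap

namespace ContinuousLinearMap

variable {𝕜 E₁ E₂ : Type*} [NontriviallyNormedField 𝕜]
  [NormedAddCommGroup E₁] [NormedSpace 𝕜 E₁] [NormedAddCommGroup E₂] [NormedSpace 𝕜 E₂]
  {M : E₁ × E₂ →L[𝕜] E₁ × E₂} {D : E₁ →L[𝕜] E₂} {Γ : E₁ →L[𝕜] E₁} {B : E₂ →L[𝕜] E₁}
  {T : E₂ ≃L[𝕜] E₂}

theorem apply_eq_of_graph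
    (hgraph : M ∘L (ContinuousLinearMap.id 𝕜 E₁).prod D = Γ.prod 0)
    (hinr : M ∘L inr 𝕜 E₁ E₂ = B.prod T) (p : E₁ × E₂) :
    M p = (Γ p.1 + B (p.2 - D p.1), T (p.2 - D p.1)) := by
  have hu : M (p.1, D p.1) = (Γ p.1, 0) := congr($hgraph p.1)
  have hv : M (0, p.2 - D p.1) = (B (p.2 - D p.1), T (p.2 - D p.1)) := congr($hinr _)
  calc M p = M (p.1, D p.1) + M (0, p.2 - D p.1) := by rw [← map_add, Prod.mk_add_mk]; simp
    _ = _ := by rw [hu, hv, Prod.mk_add_mk, zero_add]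

variable (D B T) in
def schurInverse (eΓ : E₁ ≃L[𝕜] E₁) : E₁ × E₂ →L[𝕜] E₁ × E₂ :=
  (ContinuousLinearMap.id 𝕜 E₁).prod D ∘L (eΓ.symm : E₁ →L[𝕜] E₁) ∘L
      (fst 𝕜 E₁ E₂ - B ∘L (T.symm : E₂ →L[𝕜] E₂) ∘L snd 𝕜 E₁ E₂) +
    inr 𝕜 E₁ E₂ ∘L (T.symm : E₂ →L[𝕜] E₂) ∘L snd 𝕜 E₁ E₂

theorem schurInverse_apply (eΓ : E₁ ≃L[𝕜] E₁) (p : E₁ × E₂) :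
    schurInverse D B T eΓ p =
      (eΓ.symm (p.1 - B (T.symm p.2)), D (eΓ.symm (p.1 - B (T.symm p.2))) + T.symm p.2) := by
  simp [schurInverse]

theorem comp_schurInverse_of_graph
    (hgraph : M ∘L (ContinuousLinearMap.id 𝕜 E₁).prod D = Γ.prod 0)
    (hinr : M ∘L inr 𝕜 E₁ E₂ = B.prod T) {eΓ : E₁ ≃L[𝕜] E₁} (heΓ : (eΓ : E₁ →L[𝕜] E₁) = Γ) :
    M ∘L schurInverse D B T eΓ = ContinuousLinearMap.id 𝕜 (E₁ × E₂) := by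
  subst heΓ
  refine ContinuousLinearMap.ext fun p => ?_
  simp [schurInverse_apply, apply_eq_of_graph hgraph hinr]

theorem schurInverse_comp_of_graph
    (hgraph : M ∘L (ContinuousLinearMap.id 𝕜 E₁).prod D = Γ.prod 0)
    (hinr : M ∘L inr 𝕜 E₁ E₂ = B.prod T) {eΓ : E₁ ≃L[𝕜] E₁} (heΓ : (eΓ : E₁ →L[𝕜] E₁) = Γ) :
    schurInverse D B T eΓ ∘L M = ContinuousLinearMap.id 𝕜 (E₁ × E₂) := by
  subst heΓ
  refine ContinuousLinearMap.ext fun p => ?_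
  simp [schurInverse_apply, apply_eq_of_graph hgraph hinr]

theorem isInvertible_iff_of_graph
    (hgraph : M ∘L (ContinuousLinearMap.id 𝕜 E₁).prod D = Γ.prod 0)
    (hinr : M ∘L inr 𝕜 E₁ E₂ = B.prod T) : M.IsInvertible ↔ Γ.IsInvertible := by
  constructor
  · rintro ⟨eM, rfl⟩
    refine .of_inverse (g := fst 𝕜 E₁ E₂ ∘L (eM.symm : E₁ × E₂ →L[𝕜] E₁ × E₂) ∘L inl 𝕜 E₁ E₂)
      (ext fun u => ?_) (ext fun u => ?_)
    · set p := eM.symm (u, 0)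
      have hp : (eM : E₁ × E₂ →L[𝕜] E₁ × E₂) p = (u, 0) := eM.apply_symm_apply _
      rw [apply_eq_of_graph hgraph hinr, Prod.mk.injEq, map_eq_zero_iff _ T.injective] at hp
      simpa [hp.2] using hp.1
    · have h : eM (u, D u) = (Γ u, 0) := congr($hgraph u)
      simp [← h]
  · rintro ⟨eΓ, rfl⟩
    exact .of_inverse (comp_schurInverse_of_graph hgraph hinr rfl)
      (schurInverse_comp_of_graph hgraph hinr rfl)

theorem norm_symm_le_of_graph
    (hgraph : M ∘L (ContinuousLinearMap.id 𝕜 E₁).prod D = Γ.prod 0)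
    {eΓ : E₁ ≃L[𝕜] E₁} {eM : (E₁ × E₂) ≃L[𝕜] E₁ × E₂} (heΓ : (eΓ : E₁ →L[𝕜] E₁) = Γ)
    (heM : (eM : E₁ × E₂ →L[𝕜] E₁ × E₂) = M) :
    ‖(eΓ.symm : E₁ →L[𝕜] E₁)‖ ≤ ‖(eM.symm : E₁ × E₂ →L[𝕜] E₁ × E₂)‖ := by
  subst heΓ heM
  refine opNorm_le_bound _ (norm_nonneg _) fun u => ?_
  have h : eM.symm (u, 0) = (eΓ.symm u, D (eΓ.symm u)) := by
    rw [eM.symm_apply_eq]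
    simpa using congr($hgraph (eΓ.symm u)).symm
  calc ‖eΓ.symm u‖ ≤ ‖eM.symm (u, 0)‖ := by rw [h]; exact le_max_left _ _
    _ ≤ ‖(eM.symm : E₁ × E₂ →L[𝕜] E₁ × E₂)‖ * ‖u‖ := by
      simpa using (eM.symm : E₁ × E₂ →L[𝕜] E₁ × E₂).le_opNorm (u, 0)

theorem symm_eq_schurInverse_of_graph
    (hgraph : M ∘L (ContinuousLinearMap.id 𝕜 E₁).prod D = Γ.prod 0)
    (hinr : M ∘L inr 𝕜 E₁ E₂ = B.prod T) {eΓ : E₁ ≃L[𝕜] E₁} {eM : (E₁ × E₂) ≃L[𝕜] E₁ × E₂}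
    (heΓ : (eΓ : E₁ →L[𝕜] E₁) = Γ) (heM : (eM : E₁ × E₂ →L[𝕜] E₁ × E₂) = M) :
    (eM.symm : E₁ × E₂ →L[𝕜] E₁ × E₂) = schurInverse D B T eΓ := by
  subst heM
  exact ContinuousLinearMap.ext fun p => eM.symm_apply_eq.mpr
    congr($(comp_schurInverse_of_graph hgraph hinr heΓ) p).symm

theorem norm_schurInverse_le (eΓ : E₁ ≃L[𝕜] E₁) :
    ‖schurInverse D B T eΓ‖ ≤
      max 1 ‖D‖ * ‖(eΓ.symm : E₁ →L[𝕜] E₁)‖ * (1 + ‖B‖ * ‖(T.symm : E₂ →L[𝕜] E₂)‖) +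
        ‖(T.symm : E₂ →L[𝕜] E₂)‖ := by
  have hprod : ‖(ContinuousLinearMap.id 𝕜 E₁).prod D‖ ≤ max 1 ‖D‖ := by
    rw [opNorm_prod]; exact max_le_max norm_id_le le_rfl
  have hshear : ‖fst 𝕜 E₁ E₂ - B ∘L (T.symm : E₂ →L[𝕜] E₂) ∘L snd 𝕜 E₁ E₂‖ ≤
      1 + ‖B‖ * ‖(T.symm : E₂ →L[𝕜] E₂)‖ := by
    grw [norm_sub_le, norm_fst_le, opNorm_comp_le, opNorm_comp_le, norm_snd_le, mul_one]
  unfold schurInverse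
  grw [norm_add_le, opNorm_comp_le, opNorm_comp_le, opNorm_comp_le, opNorm_comp_le,
    norm_inr_le_one, norm_snd_le, hprod, hshear]
  rw [one_mul, mul_one, ← mul_assoc]

theorem norm_le_of_graph
    (hgraph : M ∘L (ContinuousLinearMap.id 𝕜 E₁).prod D = Γ.prod 0)
    (hinr : M ∘L inr 𝕜 E₁ E₂ = B.prod T) : ‖D‖ ≤ ‖(T.symm : E₂ →L[𝕜] E₂)‖ * ‖M‖ := by
  refine opNorm_le_bound _ (by positivity) fun u => ?_
  have h : D u = -T.symm (M (u, 0)).2 := by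
    simp [apply_eq_of_graph hgraph hinr (u, 0)]
  calc ‖D u‖ ≤ ‖(T.symm : E₂ →L[𝕜] E₂)‖ * ‖M (u, 0)‖ := by
        rw [h, norm_neg]
        exact ((T.symm : E₂ →L[𝕜] E₂).le_opNorm _).trans (by gcongr; exact le_max_right _ _)
    _ ≤ ‖(T.symm : E₂ →L[𝕜] E₂)‖ * (‖M‖ * ‖u‖) := by
        gcongr; simpa using M.le_opNorm (u, 0)
    _ = _ := (mul_assoc _ _ _).symm

theorem norm_le_of_comp_inr (hinr : M ∘L inr 𝕜 E₁ E₂ = B.prod T) : ‖B‖ ≤ ‖M‖ := by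
  have hB : B = fst 𝕜 E₁ E₂ ∘L M ∘L inr 𝕜 E₁ E₂ := by rw [hinr, fst_comp_prod]
  grw [hB, opNorm_comp_le, opNorm_comp_le, norm_fst_le, norm_inr_le_one, one_mul, mul_one]

theorem norm_symm_le_of_graph_of_norm_le
    (hgraph : M ∘L (ContinuousLinearMap.id 𝕜 E₁).prod D = Γ.prod 0)
    (hinr : M ∘L inr 𝕜 E₁ E₂ = B.prod T) {eΓ : E₁ ≃L[𝕜] E₁} {eM : (E₁ × E₂) ≃L[𝕜] E₁ × E₂}
    (heΓ : (eΓ : E₁ →L[𝕜] E₁) = Γ) (heM : (eM : E₁ × E₂ →L[𝕜] E₁ × E₂) = M) {C : ℝ}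
    (hM : ‖M‖ ≤ C) (hT : ‖(T.symm : E₂ →L[𝕜] E₂)‖ ≤ C) :
    ‖(eM.symm : E₁ × E₂ →L[𝕜] E₁ × E₂)‖ ≤ (1 + C ^ 2) ^ 2 * (1 + ‖(eΓ.symm : E₁ →L[𝕜] E₁)‖) := by
  have hC : 0 ≤ C := (norm_nonneg _).trans hT
  have hD : max 1 ‖D‖ ≤ 1 + C ^ 2 := by
    refine max_le (by nlinarith) ?_
    grw [norm_le_of_graph hgraph hinr, hT, hM]
    nlinarith
  have hBT : 1 + ‖B‖ * ‖(T.symm : E₂ →L[𝕜] E₂)‖ ≤ 1 + C ^ 2 := by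
    grw [norm_le_of_comp_inr hinr, hM, hT]
    nlinarith
  rw [symm_eq_schurInverse_of_graph hgraph hinr heΓ heM]
  grw [norm_schurInverse_le, hD, hBT, hT]
  nlinarith [norm_nonneg (eΓ.symm : E₁ →L[𝕜] E₁), sq_nonneg C, sq_nonneg (C - 1)]

end ContinuousLinearMap

theorem HasFDerivAt.eq_prod_fderiv {𝕜 E E₁ E₂ : Type*} [NontriviallyNormedField 𝕜]
    [NormedAddCommGroup E] [NormedSpace 𝕜 E] [NormedAddCommGroup E₁] [NormedSpace 𝕜 E₁]
    [NormedAddCommGroup E₂] [NormedSpace 𝕜 E₂]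
    {f : E → E₁ × E₂} {f' : E →L[𝕜] E₁ × E₂} {y : E} (hf : HasFDerivAt f f' y) :
    f' = (fderiv 𝕜 (fun y => (f y).1) y).prod (fderiv 𝕜 (fun y => (f y).2) y) := by
  rw [hf.fst.fderiv, hf.snd.fderiv]
  rfl

theorem lyapunov_schmidt_estimate_general
    {E₁ E₂ : Type*} [NormedAddCommGroup E₁] [NormedSpace ℝ E₁]
    [NormedAddCommGroup E₂] [NormedSpace ℝ E₂]
    (C : ℝ) :
    ∃ c : ℝ, 0 < c ∧
      ∀ (Z₁ : Set E₁) (Z₂ : Set E₂), IsOpen Z₁ → IsOpen Z₂ →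
      ∀ G : E₁ × E₂ → E₁ × E₂, ContDiffOn ℝ 1 G (Z₁ ×ˢ Z₂) →
      (∀ z ∈ Z₁ ×ˢ Z₂, ‖fderiv ℝ G z‖ ≤ C) →
      (∀ z ∈ Z₁ ×ˢ Z₂, ∃ T : E₂ ≃L[ℝ] E₂,
        (T : E₂ →L[ℝ] E₂) = fderiv ℝ (fun x => (G (z.1, x)).2) z.2 ∧
        ‖(T.symm : E₂ →L[ℝ] E₂)‖ ≤ C) →
      ∀ x : E₁ → E₂, ContDiffOn ℝ 1 x Z₁ →
      (∀ q ∈ Z₁, x q ∈ Z₂ ∧ (G (q, x q)).2 = 0) →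
      ∀ q ∈ Z₁,
        ((∃ TΓ : E₁ ≃L[ℝ] E₁,
            (TΓ : E₁ →L[ℝ] E₁) = fderiv ℝ (fun q' => (G (q', x q')).1) q) ↔
          (∃ TG : (E₁ × E₂) ≃L[ℝ] E₁ × E₂,
            (TG : E₁ × E₂ →L[ℝ] E₁ × E₂) = fderiv ℝ G (q, x q))) ∧
        ∀ (TΓ : E₁ ≃L[ℝ] E₁) (TG : (E₁ × E₂) ≃L[ℝ] E₁ × E₂),
          (TΓ : E₁ →L[ℝ] E₁) = fderiv ℝ (fun q' => (G (q', x q')).1) q →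
          (TG : E₁ × E₂ →L[ℝ] E₁ × E₂) = fderiv ℝ G (q, x q) →
          ‖(TΓ.symm : E₁ →L[ℝ] E₁)‖ ≤ ‖(TG.symm : E₁ × E₂ →L[ℝ] E₁ × E₂)‖ ∧
          ‖(TG.symm : E₁ × E₂ →L[ℝ] E₁ × E₂)‖ ≤
            c * (1 + ‖(TΓ.symm : E₁ →L[ℝ] E₁)‖) := by
  refine ⟨(1 + C ^ 2) ^ 2, by positivity, ?_⟩
  intro Z₁ Z₂ hZ₁ hZ₂ G hG hGnorm hGinv x hx hsol q hq
  have hz : (q, x q) ∈ Z₁ ×ˢ Z₂ := ⟨hq, (hsol q hq).1⟩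
  obtain ⟨T, hT, hTC⟩ := hGinv _ hz
  have hGq : HasFDerivAt G (fderiv ℝ G (q, x q)) (q, x q) :=
    ((hG.differentiableOn one_ne_zero).differentiableAt ((hZ₁.prod hZ₂).mem_nhds hz)).hasFDerivAt
  have hxq : HasFDerivAt x (fderiv ℝ x q) q :=
    ((hx.differentiableOn one_ne_zero).differentiableAt (hZ₁.mem_nhds hq)).hasFDerivAt
  have hgraph : fderiv ℝ G (q, x q) ∘L (ContinuousLinearMap.id ℝ E₁).prod (fderiv ℝ x q) =
      (fderiv ℝ (fun q' => (G (q', x q')).1) q).prod 0 := by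
    have hsnd : fderiv ℝ (fun q' => (G (q', x q')).2) q = 0 :=
      (Filter.eventuallyEq_of_mem (hZ₁.mem_nhds hq) fun q' hq' => (hsol q' hq').2).fderiv_eq.trans
        (fderiv_const_apply 0)
    rw [← hsnd]
    exact (hGq.comp q ((hasFDerivAt_id q).prodMk hxq)).eq_prod_fderiv
  have hinr : fderiv ℝ G (q, x q) ∘L inr ℝ E₁ E₂ =
      (fderiv ℝ (fun y => (G (q, y)).1) (x q)).prod T := by
    rw [hT]
    exact (hGq.comp (x q) (hasFDerivAt_prodMk_right q (x q))).eq_prod_fderiv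
  exact ⟨(isInvertible_iff_of_graph hgraph hinr).symm,
    fun TΓ TG hTΓ hTG => ⟨norm_symm_le_of_graph hgraph hTΓ hTG,
      norm_symm_le_of_graph_of_norm_le hgraph hinr hTΓ hTG (hGnorm _ hz) hTC⟩⟩

/-- Lyapunov–Schmidt norm estimate: if `G = (G₁, G₂) : Z₁ × Z₂ → E₁ × E₂` is `C¹` with
`‖DG‖ ≤ C` and `‖(D_x G₂)⁻¹‖ ≤ C` on `Z₁ × Z₂`, and `x(q)` solves `G₂(q, x(q)) = 0`, then
for `Γ(q) = G₁(q, x(q))` the derivatives `DΓ(q)` and `DG(q, x(q))` are invertible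
simultaneously and `‖(DΓ(q))⁻¹‖ ≤ ‖(DG(q,x(q)))⁻¹‖ ≤ c(1 + ‖(DΓ(q))⁻¹‖)` with
`c` depending only on `C`. -/
theorem lyapunov_schmidt_estimate
    {E₁ E₂ : Type*} [NormedAddCommGroup E₁] [NormedSpace ℝ E₁] [CompleteSpace E₁]
    [NormedAddCommGroup E₂] [NormedSpace ℝ E₂] [CompleteSpace E₂]
    (C : ℝ) (hC : 0 < C) :
    ∃ c : ℝ, 0 < c ∧
      ∀ (Z₁ : Set E₁) (Z₂ : Set E₂), IsOpen Z₁ → IsOpen Z₂ →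
      ∀ G : E₁ × E₂ → E₁ × E₂, ContDiffOn ℝ 1 G (Z₁ ×ˢ Z₂) →
      (∀ z ∈ Z₁ ×ˢ Z₂, ‖fderiv ℝ G z‖ ≤ C) →
      (∀ z ∈ Z₁ ×ˢ Z₂, ∃ T : E₂ ≃L[ℝ] E₂,
        (T : E₂ →L[ℝ] E₂) = fderiv ℝ (fun x => (G (z.1, x)).2) z.2 ∧
        ‖(T.symm : E₂ →L[ℝ] E₂)‖ ≤ C) →
      ∀ x : E₁ → E₂, ContDiffOn ℝ 1 x Z₁ →
      (∀ q ∈ Z₁, x q ∈ Z₂ ∧ (G (q, x q)).2 = 0) →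
      ∀ q ∈ Z₁,
        ((∃ TΓ : E₁ ≃L[ℝ] E₁,
            (TΓ : E₁ →L[ℝ] E₁) = fderiv ℝ (fun q' => (G (q', x q')).1) q) ↔
          (∃ TG : (E₁ × E₂) ≃L[ℝ] E₁ × E₂,
            (TG : E₁ × E₂ →L[ℝ] E₁ × E₂) = fderiv ℝ G (q, x q))) ∧
        ∀ (TΓ : E₁ ≃L[ℝ] E₁) (TG : (E₁ × E₂) ≃L[ℝ] E₁ × E₂),
          (TΓ : E₁ →L[ℝ] E₁) = fderiv ℝ (fun q' => (G (q', x q')).1) q →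
          (TG : E₁ × E₂ →L[ℝ] E₁ × E₂) = fderiv ℝ G (q, x q) →
          ‖(TΓ.symm : E₁ →L[ℝ] E₁)‖ ≤ ‖(TG.symm : E₁ × E₂ →L[ℝ] E₁ × E₂)‖ ∧
          ‖(TG.symm : E₁ × E₂ →L[ℝ] E₁ × E₂)‖ ≤
            c * (1 + ‖(TΓ.symm : E₁ →L[ℝ] E₁)‖) :=
  lyapunov_schmidt_estimate_general C
end
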